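/- Let LEIF_{s_j}(X_1, X_{N_G(s_j)}, R) = X_1 · O_{s_j}(X_{N_G(s_j)}) · I(R ≥ N̄_G(s_j)) + m_{s_j}(X_{N_G(s_j)}) · ( I(ψ(R̄) = s_j) − I(R ≥ N̄_G(s_j)) · O_{s_j}(X_{N_G(s_j)}) ). Then E[LEIF_{s_j}] = E[X_1 I(ψ(R̄) = s_j)] = μ_{s_j}; equivalently, EIF_{s_j} = LEIF_{s_j} − μ_{s_j} has mean zero. -/
import Mathlib


open Finset
open scoped Classical

section MMG

variable {d : ℕ} {S : Type} [Fintype S]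

/-- Graph neighborhood of a vertex set. -/
def nbd (G : SimpleGraph (Fin d)) (s : Set (Fin d)) : Set (Fin d) :=
  {v | v ∉ s ∧ ∃ u ∈ s, G.Adj u v}

/-- Reachability within a set `M`. -/
def reachIn (G : SimpleGraph (Fin d)) (M : Set (Fin d)) (u v : Fin d) : Prop :=
  u ∈ M ∧ Relation.ReflTransGen (fun a b => b ∈ M ∧ G.Adj a b) u v

/-- Connected component of `M` containing `v`. -/
def compOf (G : SimpleGraph (Fin d)) (M : Set (Fin d)) (v : Fin d) : Set (Fin d) :=
  {u | reachIn G M v u}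

/-- Connected components of `M` in `G`. -/
def components (G : SimpleGraph (Fin d)) (M : Set (Fin d)) : Set (Set (Fin d)) :=
  {c | ∃ v ∈ M, c = compOf G M v}

def missingSet (r : Fin d → Bool) : Set (Fin d) := {j | r j = false}

def obsSet (r : Fin d → Bool) : Set (Fin d) := {j | r j = true}

/-- The event that all variables in `E` are observed. -/
def obsEv (E : Set (Fin d)) (r : Fin d → Bool) : Prop := ∀ j ∈ E, r j = true

/-- The density `p(x_A, R = r)`: marginalize all coordinates outside `A`. -/
noncomputable def margOn (p : (Fin d → S) → (Fin d → Bool) → ℝ)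
    (A : Set (Fin d)) (x : Fin d → S) (r : Fin d → Bool) : ℝ :=
  ∑ y : Fin d → S, if ∀ j ∈ A, y j = x j then p y r else 0

/-- The density `p(x_A, R_E = 1)`. -/
noncomputable def margObs (p : (Fin d → S) → (Fin d → Bool) → ℝ)
    (A E : Set (Fin d)) (x : Fin d → S) : ℝ :=
  ∑ r : Fin d → Bool, if obsEv E r then margOn p A x r else 0

/-- The conditional density `p(x_T | x_C, R = r)`. -/
noncomputable def condAt (p : (Fin d → S) → (Fin d → Bool) → ℝ)
    (T C : Set (Fin d)) (r : Fin d → Bool) (x : Fin d → S) : ℝ :=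
  margOn p (T ∪ C) x r / margOn p C x r

/-- The conditional density `p(x_T | x_C, R_E = 1)`. -/
noncomputable def condObs (p : (Fin d → S) → (Fin d → Bool) → ℝ)
    (T C E : Set (Fin d)) (x : Fin d → S) : ℝ :=
  margObs p (T ∪ C) E x / margObs p C E x

/-- PAI-identified submodel `p(x_T | x_{N_G(T)}, R_{N̄_G(T)} = 1)`. -/
noncomputable def condPAI (p : (Fin d → S) → (Fin d → Bool) → ℝ)
    (G : SimpleGraph (Fin d)) (T : Set (Fin d)) (x : Fin d → S) : ℝ :=
  condObs p T (nbd G T) (T ∪ nbd G T) x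

/-- MMG imputation model: product of PAI submodels over connected components of missing set. -/
noncomputable def mmgModel (p : (Fin d → S) → (Fin d → Bool) → ℝ)
    (G : SimpleGraph (Fin d)) (x : Fin d → S) (r : Fin d → Bool) : ℝ :=
  ∏ c ∈ (Set.toFinite (components G (missingSet r))).toFinset, condPAI p G c x

end MMG

/-- PAI-identified regression function
`m(x) = E[X₁ | X_N = x_N, R_{N̄} = 1]` in density form. -/
noncomputable def mReg {d : ℕ} {S : Type} [Fintype S]
    (p : (Fin d → S) → (Fin d → Bool) → ℝ) (val : S → ℝ) (v1 : Fin d)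
    (N Nb : Set (Fin d)) (x : Fin d → S) : ℝ :=
  (∑ r : Fin d → Bool, if obsEv Nb r then
      (∑ y : Fin d → S, if ∀ j ∈ N, y j = x j then val (y v1) * p y r else 0) else 0)
    / margObs p N Nb x

/-- Aggregated odds `O_{s_j}(x) = P(R ∈ S_j | X_N = x) / P(R_{N̄} = 1 | X_N = x)`. -/
noncomputable def oddsAgg {d : ℕ} {S : Type} [Fintype S]
    (p : (Fin d → S) → (Fin d → Bool) → ℝ)
    (N Nb : Set (Fin d)) (Sj : Finset (Fin d → Bool)) (x : Fin d → S) : ℝ :=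
  (∑ r ∈ Sj, margOn p N x r) / margObs p N Nb x

section Aux

variable {d : ℕ} {S : Type} [Fintype S]

lemma condSum_congr (A : Set (Fin d)) (f : (Fin d → S) → ℝ)
    {x x' : Fin d → S} (h : ∀ j ∈ A, x j = x' j) :
    (∑ y : Fin d → S, if ∀ j ∈ A, y j = x j then f y else 0)
      = ∑ y : Fin d → S, if ∀ j ∈ A, y j = x' j then f y else 0 :=
  Finset.sum_congr rfl fun y _ => if_congr
    ⟨fun hy j hj => (hy j hj).trans (h j hj),
     fun hy j hj => (hy j hj).trans (h j hj).symm⟩ rfl rfl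

lemma margOn_congr (p : (Fin d → S) → (Fin d → Bool) → ℝ) (A : Set (Fin d))
    {x x' : Fin d → S} (h : ∀ j ∈ A, x j = x' j) (r : Fin d → Bool) :
    margOn p A x r = margOn p A x' r :=
  condSum_congr A (fun y => p y r) h

lemma margObs_congr (p : (Fin d → S) → (Fin d → Bool) → ℝ) (A E : Set (Fin d))
    {x x' : Fin d → S} (h : ∀ j ∈ A, x j = x' j) :
    margObs p A E x = margObs p A E x' := by
  unfold margObs
  exact Finset.sum_congr rfl fun r _ => by rw [margOn_congr p A h r]

lemma decompAux (p : (Fin d → S) → (Fin d → Bool) → ℝ) (val : S → ℝ)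
    (v1 : Fin d) (N : Set (Fin d)) (hv : v1 ∉ N)
    (x : Fin d → S) (r : Fin d → Bool) :
    (∑ u : S, val u * margOn p ({v1} ∪ N) (Function.update x v1 u) r)
      = ∑ y : Fin d → S, if ∀ j ∈ N, y j = x j then val (y v1) * p y r else 0 := by
  classical
  unfold margOn
  simp only [Finset.mul_sum, mul_ite, mul_zero]
  rw [Finset.sum_comm]
  refine Finset.sum_congr rfl fun y _ => ?_
  have hcond : ∀ u : S,
      (∀ j ∈ ({v1} ∪ N : Set (Fin d)), y j = Function.update x v1 u j)
        ↔ (y v1 = u ∧ ∀ j ∈ N, y j = x j) := by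
    intro u
    constructor
    · intro h
      refine ⟨?_, fun j hj => ?_⟩
      · have := h v1 (Set.mem_union_left _ rfl)
        simpa using this
      · have hne : j ≠ v1 := fun e => hv (e ▸ hj)
        have := h j (Set.mem_union_right _ hj)
        rwa [Function.update_of_ne hne] at this
    · rintro ⟨h1, h2⟩ j hj
      rcases hj with hj | hj
      · have hjv : j = v1 := hj
        subst hjv
        simpa using h1
      · have hne : j ≠ v1 := fun e => hv (e ▸ hj)
        rw [Function.update_of_ne hne]
        exact h2 j hj
  simp only [hcond]
  by_cases hQ : ∀ j ∈ N, y j = x j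
  · have hsimp : ∀ u : S, (y v1 = u ∧ ∀ j ∈ N, y j = x j) ↔ y v1 = u :=
      fun u => and_iff_left hQ
    simp only [hsimp, if_pos hQ]
    rw [Finset.sum_ite_eq Finset.univ (y v1) (fun u => val u * p y r)]
    simp
  · simp [hQ]

lemma numMAux (p : (Fin d → S) → (Fin d → Bool) → ℝ) (val : S → ℝ)
    (v1 : Fin d) (N Nb : Set (Fin d)) (hv : v1 ∉ N) (x : Fin d → S) :
    (∑ r : Fin d → Bool, if obsEv Nb r then
        (∑ y : Fin d → S, if ∀ j ∈ N, y j = x j then val (y v1) * p y r else 0) else 0)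
      = ∑ u : S, val u * margObs p ({v1} ∪ N) Nb (Function.update x v1 u) := by
  classical
  unfold margObs
  simp only [Finset.mul_sum, mul_ite, mul_zero]
  rw [Finset.sum_comm]
  refine Finset.sum_congr rfl fun r _ => ?_
  by_cases h : obsEv Nb r
  · simp only [if_pos h]
    exact (decompAux p val v1 N hv x r).symm
  · simp [if_neg h]

end Aux

/-- the linear efficient influence function is unbiased.
With `LEIF = X₁·O_{s_j}(X_N)·I(R ≥ N̄) + m_{s_j}(X_N)·(I(ψ(R̄)=s_j) − I(R ≥ N̄)·O_{s_j}(X_N))`,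
one has `E[LEIF] = E[X₁ I(ψ(R̄) = s_j)] = μ_{s_j}`; equivalently `EIF = LEIF − μ_{s_j}` has
mean zero. -/
theorem stmt11 {d : ℕ} {S : Type} [Fintype S] (G : SimpleGraph (Fin d))
    (p : (Fin d → S) → (Fin d → Bool) → ℝ) (val : S → ℝ)
    (v1 : Fin d) (s N Nb : Set (Fin d))
    (hN : N = nbd G s) (hNb : Nb = s ∪ N)
    (Sj : Finset (Fin d → Bool))
    (hSj : Sj = Finset.univ.filter
      (fun r : Fin d → Bool => r v1 = false ∧ compOf G (missingSet r) v1 = s))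
    (hnn : ∀ x r, 0 ≤ p x r)
    (hMMGPAI : ∀ r ∈ Sj, ∀ x, condAt p {v1} N r x = condObs p {v1} N Nb x)
    (hpos : ∀ x, ∀ r ∈ Sj, margOn p N x r ≠ 0)
    (hposObs : ∀ x, margObs p N Nb x ≠ 0) :
    (∑ x : Fin d → S, ∑ r : Fin d → Bool,
        (val (x v1) * oddsAgg p N Nb Sj x * (if obsEv Nb r then 1 else 0)
          + mReg p val v1 N Nb x
            * ((if r ∈ Sj then 1 else 0)
                - (if obsEv Nb r then 1 else 0) * oddsAgg p N Nb Sj x)) * p x r)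
      = ∑ x : Fin d → S, ∑ r : Fin d → Bool,
          (if r ∈ Sj then 1 else 0) * val (x v1) * p x r := by
  classical
  by_cases hSjne : Sj = ∅
  · simp [hSjne, oddsAgg]
  -- v1 is not in the neighborhood N
  obtain ⟨r₀, hr₀⟩ := Finset.nonempty_iff_ne_empty.2 hSjne
  have hv : v1 ∉ N := by
    have hmemf := Finset.mem_filter.1 (hSj ▸ hr₀)
    have hfalse := hmemf.2.1
    have hcomp := hmemf.2.2
    have hv1s : v1 ∈ s := by
      rw [← hcomp]
      exact ⟨hfalse, Relation.ReflTransGen.refl⟩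
    rw [hN]
    exact fun hvN => hvN.1 hv1s
  -- Key pointwise identity for r ∈ Sj
  have K1 : ∀ r ∈ Sj, ∀ x : Fin d → S,
      (∑ y : Fin d → S, if ∀ j ∈ N, y j = x j then val (y v1) * p y r else 0)
        = margOn p N x r * mReg p val v1 N Nb x := by
    intro r hr x
    have key : ∀ u : S,
        margOn p ({v1} ∪ N) (Function.update x v1 u) r
          = margObs p ({v1} ∪ N) Nb (Function.update x v1 u)
              * margOn p N x r / margObs p N Nb x := by
      intro u
      have hup : ∀ j ∈ N, Function.update x v1 u j = x j := fun j hj =>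
        Function.update_of_ne (by rintro rfl; exact hv hj) _ _
      have h1 : margOn p N (Function.update x v1 u) r = margOn p N x r :=
        margOn_congr p N hup r
      have h2 : margObs p N Nb (Function.update x v1 u) = margObs p N Nb x :=
        margObs_congr p N Nb hup
      have h := hMMGPAI r hr (Function.update x v1 u)
      unfold condAt condObs at h
      rw [h1, h2] at h
      rw [div_eq_div_iff (hpos x r hr) (hposObs x)] at h
      rw [eq_div_iff (hposObs x)]
      exact h
    calc (∑ y : Fin d → S, if ∀ j ∈ N, y j = x j then val (y v1) * p y r else 0)
        = ∑ u : S, val u * margOn p ({v1} ∪ N) (Function.update x v1 u) r :=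
          (decompAux p val v1 N hv x r).symm
      _ = ∑ u : S, val u * (margObs p ({v1} ∪ N) Nb (Function.update x v1 u)
              * margOn p N x r / margObs p N Nb x) :=
          Finset.sum_congr rfl fun u _ => by rw [key u]
      _ = margOn p N x r
            * ((∑ u : S, val u * margObs p ({v1} ∪ N) Nb (Function.update x v1 u))
                / margObs p N Nb x) := by
          simp only [div_eq_mul_inv, Finset.sum_mul, Finset.mul_sum]
          exact Finset.sum_congr rfl fun u _ => by ring
      _ = margOn p N x r * mReg p val v1 N Nb x := by
          unfold mReg
          rw [numMAux p val v1 N Nb hv x]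
  -- fiberwise decomposition over the coordinates in N
  let g : (Fin d → S) → ({ j // j ∈ N } → S) := fun x j => x j.1
  refine Eq.trans (Eq.trans (Finset.sum_fiberwise Finset.univ g _).symm ?_)
    (Finset.sum_fiberwise Finset.univ g _)
  refine Finset.sum_congr rfl fun a _ => ?_
  by_cases hne : ∃ x0 : Fin d → S, g x0 = a
  swap
  · have hempty : Finset.univ.filter (fun x => g x = a) = ∅ :=
      Finset.filter_eq_empty_iff.2 (fun {x} _ h => hne ⟨x, h⟩)
    rw [hempty]
    simp
  obtain ⟨x0, hx0⟩ := hne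
  have hmem : ∀ x : Fin d → S, g x = a ↔ ∀ j ∈ N, x j = x0 j := by
    intro x
    rw [← hx0]
    constructor
    · intro h j hj; exact congrFun h ⟨j, hj⟩
    · intro h; funext j; exact h j.1 j.2
  have hfilter : Finset.univ.filter (fun x => g x = a)
      = Finset.univ.filter (fun x : Fin d → S => ∀ j ∈ N, x j = x0 j) :=
    Finset.filter_congr (fun x _ => hmem x)
  have hsum_p : ∀ r : Fin d → Bool,
      (∑ x ∈ Finset.univ.filter (fun x => g x = a), p x r) = margOn p N x0 r := by
    intro r
    rw [hfilter, Finset.sum_filter]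
    rfl
  have hsum_vp : ∀ r : Fin d → Bool,
      (∑ x ∈ Finset.univ.filter (fun x => g x = a), val (x v1) * p x r)
        = ∑ y : Fin d → S, if ∀ j ∈ N, y j = x0 j then val (y v1) * p y r else 0 := by
    intro r
    rw [hfilter, Finset.sum_filter]
  have hOdds : ∀ x : Fin d → S, (∀ j ∈ N, x j = x0 j) →
      oddsAgg p N Nb Sj x = oddsAgg p N Nb Sj x0 := by
    intro x hP
    unfold oddsAgg
    rw [margObs_congr p N Nb hP]
    congr 1
    exact Finset.sum_congr rfl fun r _ => margOn_congr p N hP r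
  have hM : ∀ x : Fin d → S, (∀ j ∈ N, x j = x0 j) →
      mReg p val v1 N Nb x = mReg p val v1 N Nb x0 := by
    intro x hP
    unfold mReg
    rw [margObs_congr p N Nb hP]
    congr 1
    exact Finset.sum_congr rfl fun r _ => by
      rw [condSum_congr N (fun y => val (y v1) * p y r) hP]
  -- the central per-fiber computation over r
  have Hfin : (∑ r : Fin d → Bool,
        ((oddsAgg p N Nb Sj x0 * (if obsEv Nb r then (1:ℝ) else 0))
            * (∑ y : Fin d → S, if ∀ j ∈ N, y j = x0 j then val (y v1) * p y r else 0)
          + (mReg p val v1 N Nb x0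
              * ((if r ∈ Sj then (1:ℝ) else 0)
                  - (if obsEv Nb r then (1:ℝ) else 0) * oddsAgg p N Nb Sj x0))
            * margOn p N x0 r))
      = ∑ r : Fin d → Bool, (if r ∈ Sj then (1:ℝ) else 0)
          * (∑ y : Fin d → S, if ∀ j ∈ N, y j = x0 j then val (y v1) * p y r else 0) := by
    have F1 : (∑ r : Fin d → Bool, (if obsEv Nb r then (1:ℝ) else 0)
          * (∑ y : Fin d → S, if ∀ j ∈ N, y j = x0 j then val (y v1) * p y r else 0))
        = mReg p val v1 N Nb x0 * margObs p N Nb x0 := by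
      simp only [boole_mul]
      unfold mReg
      rw [div_mul_cancel₀ _ (hposObs x0)]
    have F2 : (∑ r : Fin d → Bool, (if obsEv Nb r then (1:ℝ) else 0) * margOn p N x0 r)
        = margObs p N Nb x0 := by
      simp only [boole_mul]
      rfl
    have F3 : (∑ r : Fin d → Bool, (if r ∈ Sj then (1:ℝ) else 0) * margOn p N x0 r)
        = ∑ r ∈ Sj, margOn p N x0 r := by
      simp only [boole_mul]
      rw [Finset.sum_ite_mem, Finset.univ_inter]
    have F4 : (∑ r : Fin d → Bool, (if r ∈ Sj then (1:ℝ) else 0)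
          * (∑ y : Fin d → S, if ∀ j ∈ N, y j = x0 j then val (y v1) * p y r else 0))
        = mReg p val v1 N Nb x0 * ∑ r ∈ Sj, margOn p N x0 r := by
      simp only [boole_mul]
      rw [Finset.sum_ite_mem, Finset.univ_inter, Finset.mul_sum]
      exact Finset.sum_congr rfl fun r hr => by rw [K1 r hr x0]; ring
    have expand : ∀ r : Fin d → Bool,
        ((oddsAgg p N Nb Sj x0 * (if obsEv Nb r then (1:ℝ) else 0))
            * (∑ y : Fin d → S, if ∀ j ∈ N, y j = x0 j then val (y v1) * p y r else 0)
          + (mReg p val v1 N Nb x0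
              * ((if r ∈ Sj then (1:ℝ) else 0)
                  - (if obsEv Nb r then (1:ℝ) else 0) * oddsAgg p N Nb Sj x0))
            * margOn p N x0 r)
        = oddsAgg p N Nb Sj x0 * ((if obsEv Nb r then (1:ℝ) else 0)
              * (∑ y : Fin d → S, if ∀ j ∈ N, y j = x0 j then val (y v1) * p y r else 0))
          + (mReg p val v1 N Nb x0 * ((if r ∈ Sj then (1:ℝ) else 0) * margOn p N x0 r)
              - (mReg p val v1 N Nb x0 * oddsAgg p N Nb Sj x0)
                  * ((if obsEv Nb r then (1:ℝ) else 0) * margOn p N x0 r)) :=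
      fun r => by ring
    calc (∑ r : Fin d → Bool,
          ((oddsAgg p N Nb Sj x0 * (if obsEv Nb r then (1:ℝ) else 0))
              * (∑ y : Fin d → S, if ∀ j ∈ N, y j = x0 j then val (y v1) * p y r else 0)
            + (mReg p val v1 N Nb x0
                * ((if r ∈ Sj then (1:ℝ) else 0)
                    - (if obsEv Nb r then (1:ℝ) else 0) * oddsAgg p N Nb Sj x0))
              * margOn p N x0 r))
        = ∑ r : Fin d → Bool,
            (oddsAgg p N Nb Sj x0 * ((if obsEv Nb r then (1:ℝ) else 0)
                * (∑ y : Fin d → S, if ∀ j ∈ N, y j = x0 j then val (y v1) * p y r else 0))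
              + (mReg p val v1 N Nb x0 * ((if r ∈ Sj then (1:ℝ) else 0) * margOn p N x0 r)
                  - (mReg p val v1 N Nb x0 * oddsAgg p N Nb Sj x0)
                      * ((if obsEv Nb r then (1:ℝ) else 0) * margOn p N x0 r))) :=
          Finset.sum_congr rfl fun r _ => expand r
      _ = oddsAgg p N Nb Sj x0 * (∑ r : Fin d → Bool, (if obsEv Nb r then (1:ℝ) else 0)
              * (∑ y : Fin d → S, if ∀ j ∈ N, y j = x0 j then val (y v1) * p y r else 0))
            + (mReg p val v1 N Nb x0
                  * (∑ r : Fin d → Bool, (if r ∈ Sj then (1:ℝ) else 0) * margOn p N x0 r)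
                - (mReg p val v1 N Nb x0 * oddsAgg p N Nb Sj x0)
                    * (∑ r : Fin d → Bool, (if obsEv Nb r then (1:ℝ) else 0)
                        * margOn p N x0 r)) := by
          rw [Finset.sum_add_distrib, Finset.sum_sub_distrib, ← Finset.mul_sum,
            ← Finset.mul_sum, ← Finset.mul_sum]
      _ = ∑ r : Fin d → Bool, (if r ∈ Sj then (1:ℝ) else 0)
            * (∑ y : Fin d → S, if ∀ j ∈ N, y j = x0 j then val (y v1) * p y r else 0) := by
          rw [F1, F2, F3, F4]
          ring
  -- assemble the per-fiber equality
  calc (∑ x ∈ Finset.univ.filter (fun x => g x = a), ∑ r : Fin d → Bool,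
        (val (x v1) * oddsAgg p N Nb Sj x * (if obsEv Nb r then 1 else 0)
          + mReg p val v1 N Nb x
            * ((if r ∈ Sj then 1 else 0)
                - (if obsEv Nb r then 1 else 0) * oddsAgg p N Nb Sj x)) * p x r)
      = ∑ x ∈ Finset.univ.filter (fun x => g x = a), ∑ r : Fin d → Bool,
          ((oddsAgg p N Nb Sj x0 * (if obsEv Nb r then (1:ℝ) else 0))
              * (val (x v1) * p x r)
            + (mReg p val v1 N Nb x0
                * ((if r ∈ Sj then (1:ℝ) else 0)
                    - (if obsEv Nb r then (1:ℝ) else 0) * oddsAgg p N Nb Sj x0))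
              * p x r) := by
        refine Finset.sum_congr rfl fun x hx => ?_
        have hP : ∀ j ∈ N, x j = x0 j := (hmem x).1 (Finset.mem_filter.1 hx).2
        rw [hOdds x hP, hM x hP]
        exact Finset.sum_congr rfl fun r _ => by ring
    _ = ∑ r : Fin d → Bool, ∑ x ∈ Finset.univ.filter (fun x => g x = a),
          ((oddsAgg p N Nb Sj x0 * (if obsEv Nb r then (1:ℝ) else 0))
              * (val (x v1) * p x r)
            + (mReg p val v1 N Nb x0
                * ((if r ∈ Sj then (1:ℝ) else 0)
                    - (if obsEv Nb r then (1:ℝ) else 0) * oddsAgg p N Nb Sj x0))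
              * p x r) := Finset.sum_comm
    _ = ∑ r : Fin d → Bool,
          ((oddsAgg p N Nb Sj x0 * (if obsEv Nb r then (1:ℝ) else 0))
              * (∑ y : Fin d → S, if ∀ j ∈ N, y j = x0 j then val (y v1) * p y r else 0)
            + (mReg p val v1 N Nb x0
                * ((if r ∈ Sj then (1:ℝ) else 0)
                    - (if obsEv Nb r then (1:ℝ) else 0) * oddsAgg p N Nb Sj x0))
              * margOn p N x0 r) := by
        refine Finset.sum_congr rfl fun r _ => ?_
        rw [Finset.sum_add_distrib, ← Finset.mul_sum, ← Finset.mul_sum,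
          hsum_vp r, hsum_p r]
    _ = ∑ r : Fin d → Bool, (if r ∈ Sj then (1:ℝ) else 0)
          * (∑ y : Fin d → S, if ∀ j ∈ N, y j = x0 j then val (y v1) * p y r else 0) :=
        Hfin
    _ = ∑ r : Fin d → Bool, ∑ x ∈ Finset.univ.filter (fun x => g x = a),
          (if r ∈ Sj then (1:ℝ) else 0) * val (x v1) * p x r := by
        refine Finset.sum_congr rfl fun r _ => ?_
        rw [← hsum_vp r, Finset.mul_sum]
        exact Finset.sum_congr rfl fun x _ => by ring
    _ = ∑ x ∈ Finset.univ.filter (fun x => g x = a), ∑ r : Fin d → Bool,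
          (if r ∈ Sj then 1 else 0) * val (x v1) * p x r := Finset.sum_comm
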